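/- Let Ω be a compact metrizable space, let 𝒫 ⊆ Δ(Ω) be a nonempty compact convex set of Borel probability measures, let 𝒫' ⊆ 𝒫 be a nonempty closed convex subset, and let P* ∈ Δ(Ω). Then P* ∈ 𝒫' if and only if for all acts f, g : Ω → [0,1]: if inf_{P ∈ 𝒫'} ∫ g dP ≥ inf_{P ∈ 𝒫'} ∫ f dP, then ∫ g dP* ≥ inf_{P ∈ 𝒫} ∫ f dP. (This is the characterization that the data-driven decision objectively improves upon the data-free certainty equivalent across all decision problems if and only if the updated set accommodates the true DGP: whenever g is weakly better than f by the maxmin criterion under the updated set 𝒫', the objective payoff of g under P* is at least the worst-case expected payoff of f under the initial set 𝒫.) -/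

import Mathlib

/-!
If `P* ∈ Q`, then `MEU P f ≤ MEU Q f ≤ MEU Q g ≤ ∫ g dP*`, since an infimum decreases as the set
grows. Conversely, if `P* ∉ Q`, strictly separate `P*` from the compact convex set `Q` by a
bounded continuous function: the map `μ ↦ (∫ h dμ)_h` over all bounded continuous `h` is continuous
and injective, so finitely many coordinates already keep `P*` outside the image of `Q`, and
Hahn–Banach in that finite-dimensional space yields the separating function. Rescaled into `[0,1]`
it is an act `g` and a level `c` with `∫ g dP* < c ≤ MEU Q g`, so `g` is weakly better under `Q`
than the constant act `c`, whose worst case under `P` is `c > ∫ g dP*`.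
-/

open MeasureTheory Set
open scoped NNReal

/-- Maxmin expected utility. -/
noncomputable def MEU {Ω : Type*} [MeasurableSpace Ω]
    (Q : Set (ProbabilityMeasure Ω)) (f : Ω → ℝ) : ℝ :=
  sInf ((fun P : ProbabilityMeasure Ω => ∫ ω, f ω ∂(P : Measure Ω)) '' Q)

open Topology
open scoped BoundedContinuousFunction

section MEU

variable {Ω : Type*} [MeasurableSpace Ω] {Q R : Set (ProbabilityMeasure Ω)} {f : Ω → ℝ}

lemma MEU_const (hQ : Q.Nonempty) (c : ℝ) : MEU Q (fun _ => c) = c := by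
  simp [MEU, hQ.image_const]

lemma MEU_le_integral (hf : 0 ≤ f) {μ : ProbabilityMeasure Ω} (hμ : μ ∈ Q) :
    MEU Q f ≤ ∫ ω, f ω ∂(μ : Measure Ω) :=
  csInf_le ⟨0, by rintro _ ⟨ν, -, rfl⟩; exact integral_nonneg hf⟩ ⟨μ, hμ, rfl⟩

lemma le_MEU (hQ : Q.Nonempty) {c : ℝ} (h : ∀ μ ∈ Q, c ≤ ∫ ω, f ω ∂(μ : Measure Ω)) :
    c ≤ MEU Q f :=
  le_csInf (hQ.image _) (by rintro _ ⟨μ, hμ, rfl⟩; exact h μ hμ)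

lemma MEU_anti (hQ : Q.Nonempty) (hQR : Q ⊆ R) (hf : 0 ≤ f) : MEU R f ≤ MEU Q f :=
  le_MEU hQ fun _ hμ => MEU_le_integral hf (hQR hμ)

end MEU

lemma integral_mem_Icc_of_mem_Icc {Ω : Type*} [MeasurableSpace Ω] {μ : Measure Ω}
    [IsProbabilityMeasure μ] {f : Ω → ℝ} (hf : ∀ ω, f ω ∈ Icc (0 : ℝ) 1) :
    ∫ ω, f ω ∂μ ∈ Icc (0 : ℝ) 1 := by
  refine ⟨integral_nonneg fun ω => (hf ω).1, ?_⟩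
  calc ∫ ω, f ω ∂μ ≤ ∫ _, (1 : ℝ) ∂μ :=
        integral_mono_of_nonneg (.of_forall fun ω => (hf ω).1) (integrable_const 1)
          (.of_forall fun ω => (hf ω).2)
    _ = 1 := by simp

lemma exists_finset_restrict_notMem_image {ι : Type*} {X : ι → Type*}
    [∀ i, TopologicalSpace (X i)] {K : Set (∀ i, X i)} (hK : IsClosed K) {x : ∀ i, X i}
    (hx : x ∉ K) : ∃ I : Finset ι, I.restrict x ∉ I.restrict '' K := by
  have hnhds : Kᶜ ∈ 𝓝 x := hK.isOpen_compl.mem_nhds hx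
  rw [nhds_pi] at hnhds
  obtain ⟨I, t, ht, hsub⟩ := Filter.mem_pi'.1 hnhds
  refine ⟨I, fun ⟨y, hyK, hyx⟩ => hsub (fun i hi => ?_) hyK⟩
  rw [show y i = x i from congrFun hyx ⟨i, hi⟩]
  exact mem_of_mem_nhds (ht i)

lemma integral_sum_smul_eq_apply_integral {Ω : Type*} [MeasurableSpace Ω] [TopologicalSpace Ω]
    [OpensMeasurableSpace Ω] {ι : Type*} [Fintype ι] [DecidableEq ι]
    (L : (ι → ℝ) →L[ℝ] ℝ) (F : ι → Ω →ᵇ ℝ) (μ : Measure Ω) [IsFiniteMeasure μ] :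
    ∫ ω, (∑ i, L (fun j => if i = j then 1 else 0) • F i) ω ∂μ =
      L fun i => ∫ ω, F i ω ∂μ := by
  rw [show L _ = _ from L.toLinearMap.pi_apply_eq_sum_univ _]
  simp only [BoundedContinuousFunction.coe_sum, BoundedContinuousFunction.coe_smul,
    Finset.sum_apply, smul_eq_mul, ContinuousLinearMap.coe_coe]
  rw [integral_finsetSum _ fun i _ => ((F i).integrable μ).const_mul _]
  refine Finset.sum_congr rfl fun i _ => ?_
  rw [integral_const_mul, mul_comm]

namespace MeasureTheory.ProbabilityMeasure

variable {Ω : Type*} [MeasurableSpace Ω] [TopologicalSpace Ω]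

lemma continuous_integral_pi [OpensMeasurableSpace Ω] {ι : Type*} (F : ι → Ω →ᵇ ℝ) :
    Continuous fun μ : ProbabilityMeasure Ω => fun i => ∫ ω, F i ω ∂(μ : Measure Ω) :=
  _root_.continuous_pi fun i => continuous_integral_boundedContinuousFunction (F i)

lemma injective_integral_pi [HasOuterApproxClosed Ω] [BorelSpace Ω] :
    Function.Injective fun μ : ProbabilityMeasure Ω =>
      fun f : Ω →ᵇ ℝ => ∫ ω, f ω ∂(μ : Measure Ω) :=
  fun _ _ h => toMeasure_injective (ext_of_forall_integral_eq_of_IsFiniteMeasure (congrFun h))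

lemma convex_image_integral_pi [OpensMeasurableSpace Ω] {ι : Type*} (F : ι → Ω →ᵇ ℝ)
    {Q : Set (ProbabilityMeasure Ω)} (hQ : Convex ℝ≥0 (toMeasure '' Q)) :
    Convex ℝ ((fun μ : ProbabilityMeasure Ω => fun i => ∫ ω, F i ω ∂(μ : Measure Ω)) '' Q) := by
  rintro _ ⟨μ, hμ, rfl⟩ _ ⟨ν, hν, rfl⟩ a b ha hb hab
  obtain ⟨σ, hσ, hσeq⟩ := hQ (mem_image_of_mem _ hμ) (mem_image_of_mem _ hν)
    zero_le zero_le (by rw [← Real.toNNReal_add ha hb, hab, Real.toNNReal_one])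
  refine ⟨σ, hσ, funext fun i => ?_⟩
  simp only [hσeq, Pi.add_apply, Pi.smul_apply, smul_eq_mul]
  rw [integral_add_measure ((F i).integrable _) ((F i).integrable _),
    integral_smul_nnreal_measure, integral_smul_nnreal_measure, NNReal.smul_def,
    NNReal.smul_def, Real.coe_toNNReal a ha, Real.coe_toNNReal b hb, smul_eq_mul, smul_eq_mul]

theorem exists_bcf_integral_lt_of_notMem [HasOuterApproxClosed Ω] [BorelSpace Ω]
    {Q : Set (ProbabilityMeasure Ω)} (hQ : IsCompact Q) (hQconv : Convex ℝ≥0 (toMeasure '' Q))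
    {P : ProbabilityMeasure Ω} (hP : P ∉ Q) :
    ∃ (g : Ω →ᵇ ℝ) (c : ℝ), ∫ ω, g ω ∂(P : Measure Ω) < c ∧
      ∀ μ ∈ Q, c < ∫ ω, g ω ∂(μ : Measure Ω) := by
  classical
  obtain ⟨I, hI⟩ := exists_finset_restrict_notMem_image
    (hQ.image (continuous_integral_pi id)).isClosed (injective_integral_pi.mem_set_image.not.2 hP)
  rw [image_image] at hI
  obtain ⟨L, c, hLP, hLQ⟩ := geometric_hahn_banach_point_closed
    (convex_image_integral_pi (fun i : I => (i : Ω →ᵇ ℝ)) hQconv)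
    (hQ.image (continuous_integral_pi _)).isClosed hI
  refine ⟨∑ i, L (fun j => if i = j then 1 else 0) • (i : Ω →ᵇ ℝ), c, ?_, fun μ hμ => ?_⟩
  · rw [integral_sum_smul_eq_apply_integral]
    exact hLP
  · rw [integral_sum_smul_eq_apply_integral]
    exact hLQ _ (mem_image_of_mem _ hμ)

theorem exists_unitInterval_integral_lt_of_notMem [HasOuterApproxClosed Ω] [BorelSpace Ω]
    {Q : Set (ProbabilityMeasure Ω)} (hQ : IsCompact Q) (hQconv : Convex ℝ≥0 (toMeasure '' Q))
    {P : ProbabilityMeasure Ω} (hP : P ∉ Q) :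
    ∃ g : Ω → ℝ, Measurable g ∧ (∀ ω, g ω ∈ Icc (0 : ℝ) 1) ∧ ∃ c : ℝ,
      ∫ ω, g ω ∂(P : Measure Ω) < c ∧ ∀ μ ∈ Q, c < ∫ ω, g ω ∂(μ : Measure Ω) := by
  obtain ⟨g, c, hgP, hgQ⟩ := exists_bcf_integral_lt_of_notMem hQ hQconv hP
  set M := ‖g‖
  have hb : 0 < 2 * M + 1 := by positivity
  have hint (μ : ProbabilityMeasure Ω) : ∫ ω, (g ω + M) / (2 * M + 1) ∂(μ : Measure Ω) =
      (∫ ω, g ω ∂(μ : Measure Ω) + M) / (2 * M + 1) := by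
    rw [integral_div, integral_add (g.integrable _) (integrable_const M)]
    simp
  refine ⟨fun ω => (g ω + M) / (2 * M + 1), (g.continuous.measurable.add_const M).div_const _,
    fun ω => ?_, (c + M) / (2 * M + 1), ?_, fun μ hμ => ?_⟩
  · obtain ⟨hlow, hup⟩ := abs_le.1 (Real.norm_eq_abs _ ▸ g.norm_coe_le_norm ω)
    exact ⟨div_nonneg (by linarith) hb.le, (div_le_one hb).2 (by linarith)⟩
  · rw [hint]
    gcongr
  · rw [hint]
    gcongr
    exact hgQ μ hμ

end MeasureTheory.ProbabilityMeasure

theorem accommodates_iff_improves_certainty_equivalent_general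
    {Ω : Type*} [MeasurableSpace Ω] [TopologicalSpace Ω] [BorelSpace Ω]
    [TopologicalSpace.MetrizableSpace Ω]
    (P Q : Set (ProbabilityMeasure Ω))
    (hPne : P.Nonempty) (hPcpt : IsCompact P)
    (hQne : Q.Nonempty) (hQsub : Q ⊆ P) (hQcl : IsClosed Q)
    (hQconv : Convex ℝ≥0 (ProbabilityMeasure.toMeasure '' Q))
    (Pstar : ProbabilityMeasure Ω) :
    Pstar ∈ Q ↔
      ∀ f g : Ω → ℝ,
        Measurable f → (∀ ω, f ω ∈ Icc (0 : ℝ) 1) →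
        Measurable g → (∀ ω, g ω ∈ Icc (0 : ℝ) 1) →
        MEU Q g ≥ MEU Q f →
        (∫ ω, g ω ∂(Pstar : Measure Ω)) ≥ MEU P f := by
  refine ⟨fun hPstar f g _ hf _ hg hfg => ?_, fun H => ?_⟩
  · calc MEU P f ≤ MEU Q f := MEU_anti hQne hQsub fun ω => (hf ω).1
      _ ≤ MEU Q g := hfg
      _ ≤ ∫ ω, g ω ∂(Pstar : Measure Ω) := MEU_le_integral (fun ω => (hg ω).1) hPstar
  by_contra hPstar
  obtain ⟨g, hgm, hg, c, hgPstar, hgQ⟩ :=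
    ProbabilityMeasure.exists_unitInterval_integral_lt_of_notMem
      (hPcpt.of_isClosed_subset hQcl hQsub) hQconv hPstar
  obtain ⟨μ, hμ⟩ := hQne
  have hc : c ∈ Icc (0 : ℝ) 1 :=
    ⟨(integral_mem_Icc_of_mem_Icc hg).1.trans hgPstar.le,
      (hgQ μ hμ).le.trans (integral_mem_Icc_of_mem_Icc hg).2⟩
  have hcg : MEU Q g ≥ MEU Q (fun _ => c) :=
    (MEU_const ⟨μ, hμ⟩ c).trans_le (le_MEU ⟨μ, hμ⟩ fun ν hν => (hgQ ν hν).le)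
  have hgPstar_ge := H (fun _ => c) g measurable_const (fun _ => hc) hgm hg hcg
  rw [MEU_const hPne] at hgPstar_ge
  exact hgPstar.not_ge hgPstar_ge

/-- **Theorem 3 (certainty-equivalent improvement).** `P* ∈ Q` iff for all acts
`f, g : Ω → [0,1]`: whenever `g` is weakly better than `f` by the maxmin
criterion under the updated set `Q`, the objective payoff of `g` under `P*` is
at least the worst-case expected payoff of `f` under the initial set `P`. -/
theorem accommodates_iff_improves_certainty_equivalent
    {Ω : Type*} [MeasurableSpace Ω] [TopologicalSpace Ω] [BorelSpace Ω]
    [CompactSpace Ω] [TopologicalSpace.MetrizableSpace Ω]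
    (P Q : Set (ProbabilityMeasure Ω))
    (hPne : P.Nonempty) (hPcpt : IsCompact P)
    (hPconv : Convex ℝ≥0 (ProbabilityMeasure.toMeasure '' P))
    (hQne : Q.Nonempty) (hQsub : Q ⊆ P) (hQcl : IsClosed Q)
    (hQconv : Convex ℝ≥0 (ProbabilityMeasure.toMeasure '' Q))
    (Pstar : ProbabilityMeasure Ω) :
    Pstar ∈ Q ↔
      ∀ f g : Ω → ℝ,
        Measurable f → (∀ ω, f ω ∈ Icc (0 : ℝ) 1) →
        Measurable g → (∀ ω, g ω ∈ Icc (0 : ℝ) 1) →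
        MEU Q g ≥ MEU Q f →
        (∫ ω, g ω ∂(Pstar : Measure Ω)) ≥ MEU P f :=
  accommodates_iff_improves_certainty_equivalent_general P Q hPne hPcpt hQne hQsub hQcl hQconv Pstar
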